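/- If p : ℝ → ℝ is a smooth function with p(t) ≥ 0 for all t and p(0) = 0, then p'(0) = 0, and consequently p(x) = x²·r(x) for some smooth function r : ℝ → ℝ with r(t) ≥ 0 whenever t ≠ 0. -/

import Mathlib

open scoped ContDiff

lemma hadamard_aux (n : ℕ) : ∀ H : ℝ → ℝ → ℝ, ContDiff ℝ ∞ (Function.uncurry H) →
    ContDiff ℝ n (fun x => ∫ t in (0:ℝ)..1, H x t) := by
  induction n with
  | zero =>
    intro H hH
    exact contDiff_zero.2
      (intervalIntegral.continuous_parametric_intervalIntegral_of_continuous' hH.continuous 0 1)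
  | succ n ih =>
    intro H hH
    set H' : ℝ → ℝ → ℝ := fun x t => fderiv ℝ (Function.uncurry H) (x, t) (1, 0) with hH'
    have hH'c : ContDiff ℝ ∞ (Function.uncurry H') := by
      have := (hH.fderiv_right (m := ∞) le_rfl).clm_apply
        (contDiff_const (c := ((1:ℝ), (0:ℝ))))
      exact this
    have hder : ∀ x t, HasDerivAt (fun y => H y t) (H' x t) x := by
      intro x t
      have h1 : HasFDerivAt (Function.uncurry H) (fderiv ℝ (Function.uncurry H) (x, t)) (x, t) :=
        (hH.differentiable (by simp)).differentiableAt.hasFDerivAt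
      have h2 : HasDerivAt (fun y : ℝ => (y, t)) ((1:ℝ), (0:ℝ)) x :=
        (hasDerivAt_id x).prodMk (hasDerivAt_const x t)
      exact h1.comp_hasDerivAt x h2
    have hHD : ∀ x0, HasDerivAt (fun x => ∫ t in (0:ℝ)..1, H x t)
        (∫ t in (0:ℝ)..1, H' x0 t) x0 := by
      intro x0
      obtain ⟨C, hC⟩ := ((isCompact_closedBall x0 1).prod (isCompact_Icc (a := (0:ℝ)) (b := 1))
        ).exists_bound_of_continuousOn hH'c.continuous.continuousOn
      refine (intervalIntegral.hasDerivAt_integral_of_dominated_loc_of_deriv_le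
        (μ := MeasureTheory.volume) (bound := fun _ => C)
        (Metric.closedBall_mem_nhds x0 one_pos) ?_ ?_ ?_ ?_ ?_ ?_).2
      · exact Filter.Eventually.of_forall fun x =>
          (hH.continuous.comp (continuous_const.prodMk continuous_id)).aestronglyMeasurable
      · exact (hH.continuous.comp (continuous_const.prodMk continuous_id)).intervalIntegrable _ _
      · exact (hH'c.continuous.comp (continuous_const.prodMk continuous_id)).aestronglyMeasurable
      · refine Filter.Eventually.of_forall fun t ht x hx => hC (x, t) ⟨hx, ?_⟩
        rw [Set.uIoc_of_le zero_le_one] at ht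
        exact ⟨ht.1.le, ht.2⟩
      · exact intervalIntegrable_const
      · exact Filter.Eventually.of_forall fun t _ x _ => hder x t
    push_cast
    rw [contDiff_succ_iff_deriv]
    refine ⟨fun x => (hHD x).differentiableAt, by simp, ?_⟩
    rw [show deriv (fun x => ∫ t in (0:ℝ)..1, H x t) = fun x => ∫ t in (0:ℝ)..1, H' x t
      from funext fun x => (hHD x).deriv]
    exact ih H' hH'c

lemma contDiff_dslope_zero {f : ℝ → ℝ} (hf : ContDiff ℝ ∞ f) : ContDiff ℝ ∞ (dslope f 0) := by
  have hdf := contDiff_infty_iff_deriv.1 hf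
  have hH : ContDiff ℝ ∞ (Function.uncurry fun x t : ℝ => deriv f (t * x)) :=
    hdf.2.comp (contDiff_snd.mul contDiff_fst)
  have heq : dslope f 0 = fun x => ∫ t in (0:ℝ)..1, deriv f (t * x) := by
    funext x
    rcases eq_or_ne x 0 with rfl | hx
    · simp [dslope_same]
    · rw [dslope_of_ne _ hx, slope_def_field]
      have hd : ∀ t ∈ Set.uIcc (0:ℝ) 1,
          HasDerivAt (fun t => f (t * x) / x) (deriv f (t * x)) t := by
        intro t _
        have := (hdf.1 (t * x)).hasDerivAt.comp t ((hasDerivAt_id t).mul_const x)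
        have h2 : HasDerivAt (fun t => f (t * x) / x) (deriv f (t * x) * (1 * x) / x) t :=
          this.div_const x
        rwa [one_mul, mul_div_assoc, div_self hx, mul_one] at h2
      rw [intervalIntegral.integral_eq_sub_of_hasDerivAt hd
        ((hdf.2.continuous.comp (continuous_id.mul continuous_const)).intervalIntegrable _ _)]
      simp only [one_mul, zero_mul, sub_zero]
      field_simp
  rw [heq]
  exact contDiff_infty.2 fun n => hadamard_aux n _ hH

/-- If `p : ℝ → ℝ` is smooth, nonnegative, and `p 0 = 0`, then `p' 0 = 0`, and
consequently `p x = x² · r x` for some smooth function `r : ℝ → ℝ` which is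
nonnegative away from `0`. -/
theorem nonneg_smooth_vanishing_deriv_and_factor (p : ℝ → ℝ) (hp : ContDiff ℝ (⊤ : ℕ∞) p)
    (hnonneg : ∀ t, 0 ≤ p t) (h0 : p 0 = 0) :
    deriv p 0 = 0 ∧
      ∃ r : ℝ → ℝ, ContDiff ℝ (⊤ : ℕ∞) r ∧ (∀ x, p x = x ^ 2 * r x) ∧
        ∀ t, t ≠ 0 → 0 ≤ r t := by
  have hd0 : deriv p 0 = 0 := by
    apply IsLocalMin.deriv_eq_zero
    exact Filter.Eventually.of_forall fun t => by rw [h0]; exact hnonneg t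
  refine ⟨hd0, ?_⟩
  set r : ℝ → ℝ := dslope (dslope p 0) 0 with hr
  -- the factorization
  have hfac : ∀ x, p x = x ^ 2 * r x := by
    intro x
    rcases eq_or_ne x 0 with rfl | hx
    · simp [h0]
    · simp only [hr, dslope_of_ne _ hx, slope_def_field, dslope_same, hd0, h0]
      field_simp
      ring
  refine ⟨r, ?_, hfac, ?_⟩
  · -- analyticity of r
    exact contDiff_dslope_zero (contDiff_dslope_zero hp)
  · intro t ht
    have h1 : r t = p t / t ^ 2 := by
      have := hfac t
      field_simp at this ⊢
      linarith [this]
    rw [h1]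
    exact div_nonneg (hnonneg t) (sq_nonneg t)
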